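/- arXiv:1502.07467 — 2 statements merged into one kernel-verified Lean document; each statement's English description precedes it below -/
import Mathlib

section
/- Non-uniform Isolation Lemma: Let m ≥ 1 and let 𝓕₁, …, 𝓕_{2^m} be (possibly empty) families of subsets of {1,…,m}. Then there exists a sequence w¹, …, w^m of weight assignments {1,…,m} → {1,…,4m} such that for every i ∈ {1,…,2^m} with 𝓕ᵢ nonempty, there exists j ∈ {1,…,m} such that the minimum-weight set of 𝓕ᵢ with respect to w^j is unique. -/
/-!
Call `x` ambiguous for `w` if one minimum-weight set contains `x` and another avoids it; a
nonempty family fails to be isolated by `w` exactly when some element is ambiguous. Given the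
weights of all other elements, at most one value of `w x` makes `x` ambiguous
(Mulmuley–Vazirani–Vazirani), so among the `s ^ n` weight functions `α → S` at most
`n * s ^ (n - 1)` fail to isolate a given family. A sequence of `k` weight functions therefore
fails for that family with probability at most `(n / s) ^ k`, and a union bound over the families
leaves a sequence that works for all of them as soon as `#families * n ^ k < s ^ k`; for
`2 ^ m` families, `n = k = m` and `s = 4 m` this reads `2 ^ m * m ^ m < (4 m) ^ m`.
-/

open Finset

variable {α M : Type*} [AddCommMonoid M]

section Defs

variable [LE M]

def IsMinWeight (𝓕 : Finset (Finset α)) (w : α → M) (F : Finset α) : Prop :=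
  F ∈ 𝓕 ∧ ∀ G ∈ 𝓕, ∑ x ∈ F, w x ≤ ∑ x ∈ G, w x

def IsIsolating (𝓕 : Finset (Finset α)) (w : α → M) : Prop :=
  ∃! F, IsMinWeight 𝓕 w F

def IsAmbiguous (𝓕 : Finset (Finset α)) (w : α → M) (x : α) : Prop :=
  ∃ F G, IsMinWeight 𝓕 w F ∧ IsMinWeight 𝓕 w G ∧ x ∈ F ∧ x ∉ G

end Defs

variable [LinearOrder M]

theorem exists_isAmbiguous_of_not_isIsolating {𝓕 : Finset (Finset α)} {w : α → M}
    (h𝓕 : 𝓕.Nonempty) (h : ¬ IsIsolating 𝓕 w) : ∃ x, IsAmbiguous 𝓕 w x := by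
  obtain ⟨F, hF, hFmin⟩ := exists_min_image 𝓕 (fun F => ∑ x ∈ F, w x) h𝓕
  obtain ⟨G, hG, hGF⟩ : ∃ G, IsMinWeight 𝓕 w G ∧ G ≠ F := by
    by_contra! hc
    exact h ⟨F, ⟨hF, hFmin⟩, hc⟩
  obtain ⟨x, hx⟩ := not_forall.1 (mt Finset.ext hGF)
  by_cases hxG : x ∈ G
  · exact ⟨x, G, F, hG, ⟨hF, hFmin⟩, hxG, fun hxF => hx (iff_of_true hxG hxF)⟩
  · exact ⟨x, F, G, ⟨hF, hFmin⟩, hG, by tauto, hxG⟩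

variable [IsOrderedCancelAddMonoid M]

theorem IsMinWeight.apply_le {𝓕 : Finset (Finset α)} {u v : α → M} {x : α}
    {F G : Finset α} (huv : ∀ y ≠ x, u y = v y) (hG : IsMinWeight 𝓕 u G) (hxG : x ∉ G)
    (hF : IsMinWeight 𝓕 v F) (hxF : x ∈ F) : v x ≤ u x := by
  classical
  have hGuv : ∑ y ∈ G, u y = ∑ y ∈ G, v y :=
    sum_congr rfl fun y hy => huv y (ne_of_mem_of_not_mem hy hxG)
  have hFuv : ∑ y ∈ F.erase x, u y = ∑ y ∈ F.erase x, v y :=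
    sum_congr rfl fun y hy => huv y (ne_of_mem_erase hy)
  refine le_of_add_le_add_right (a := ∑ y ∈ F.erase x, v y) ?_
  rw [add_sum_erase _ _ hxF, ← hFuv, add_sum_erase _ _ hxF]
  calc ∑ y ∈ F, v y ≤ ∑ y ∈ G, v y := hF.2 G hG.1
    _ = ∑ y ∈ G, u y := hGuv.symm
    _ ≤ ∑ y ∈ F, u y := hG.2 F hF.1

theorem IsAmbiguous.eq_of_forall_ne {𝓕 : Finset (Finset α)} {u v : α → M} {x : α}
    (hu : IsAmbiguous 𝓕 u x) (hv : IsAmbiguous 𝓕 v x) (huv : ∀ y ≠ x, u y = v y) :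
    u = v := by
  funext y
  by_cases hy : y = x
  · subst hy
    obtain ⟨Fu, Gu, hFu, hGu, hxFu, hxGu⟩ := hu
    obtain ⟨Fv, Gv, hFv, hGv, hxFv, hxGv⟩ := hv
    exact le_antisymm (hGv.apply_le (fun z hz => (huv z hz).symm) hxGv hFu hxFu)
      (hGu.apply_le huv hxGu hFv hxFv)
  · exact huv y hy

section Counting

variable [Fintype α] [DecidableEq α]

open Classical in
theorem card_filter_isAmbiguous_mul_le (𝓕 : Finset (Finset α)) (S : Finset M) (x : α) :
    #{w ∈ Fintype.piFinset fun _ => S | IsAmbiguous 𝓕 w x} * #S ≤ #S ^ Fintype.card α := by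
  have hrestrict : #{w ∈ Fintype.piFinset fun _ => S | IsAmbiguous 𝓕 w x} ≤
      #(Fintype.piFinset fun _ : {y // y ≠ x} => S) := by
    refine card_le_card_of_injOn (fun w y => w y) (fun w hw => ?_) (fun u hu v hv huv => ?_)
    · exact Fintype.mem_piFinset.2 fun y => Fintype.mem_piFinset.1 (mem_filter.1 hw).1 y
    · exact (mem_filter.1 hu).2.eq_of_forall_ne (mem_filter.1 hv).2
        fun y hy => congrFun huv ⟨y, hy⟩
  have hcard : Fintype.card α ≠ 0 := (Fintype.card_pos_iff.2 ⟨x⟩).ne'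
  calc _ ≤ #S ^ (Fintype.card α - 1) * #S := by
        refine Nat.mul_le_mul_right _ (hrestrict.trans_eq ?_)
        simp [Fintype.card_piFinset, Fintype.card_subtype_compl]
    _ = #S ^ Fintype.card α := pow_sub_one_mul hcard _

open Classical in
theorem card_filter_not_isIsolating_mul_le {𝓕 : Finset (Finset α)} (h𝓕 : 𝓕.Nonempty)
    (S : Finset M) :
    #{w ∈ Fintype.piFinset fun _ => S | ¬ IsIsolating 𝓕 w} * #S ≤
      Fintype.card α * #S ^ Fintype.card α := by
  set amb := fun x : α => {w ∈ Fintype.piFinset fun _ : α => S | IsAmbiguous 𝓕 w x}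
  have hsub : {w ∈ Fintype.piFinset fun _ : α => S | ¬ IsIsolating 𝓕 w} ⊆ univ.biUnion amb := by
    intro w hw
    obtain ⟨hwS, hw⟩ := mem_filter.1 hw
    obtain ⟨x, hx⟩ := exists_isAmbiguous_of_not_isIsolating h𝓕 hw
    exact mem_biUnion.2 ⟨x, mem_univ x, mem_filter.2 ⟨hwS, hx⟩⟩
  calc _ ≤ (∑ x, #(amb x)) * #S :=
        Nat.mul_le_mul_right _ ((card_le_card hsub).trans card_biUnion_le)
    _ = ∑ x, #(amb x) * #S := sum_mul ..
    _ ≤ ∑ _x : α, #S ^ Fintype.card α :=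
        sum_le_sum fun x _ => card_filter_isAmbiguous_mul_le 𝓕 S x
    _ = Fintype.card α * #S ^ Fintype.card α := by simp

theorem exists_forall_exists_isIsolating {ι κ : Type*} [Fintype ι] [Fintype κ]
    (𝓕 : ι → Finset (Finset α)) (S : Finset M)
    (h : Fintype.card ι * Fintype.card α ^ Fintype.card κ < #S ^ Fintype.card κ) :
    ∃ w : κ → α → M, (∀ j x, w j x ∈ S) ∧
      ∀ i, (𝓕 i).Nonempty → ∃ j, IsIsolating (𝓕 i) (w j) := by
  classical
  set n := Fintype.card α
  set k := Fintype.card κ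
  set T := Fintype.piFinset fun _ : α => S
  set Bad := fun i => Fintype.piFinset fun _ : κ => {w ∈ T | ¬ IsIsolating (𝓕 i) w}
  set I := ({i | (𝓕 i).Nonempty} : Finset ι)
  have hBad : ∀ i ∈ I, #(Bad i) * #S ^ k ≤ n ^ k * (#S ^ n) ^ k := by
    intro i hi
    simp only [Bad, Fintype.card_piFinset, prod_const, card_univ, ← mul_pow, k]
    exact Nat.pow_le_pow_left (card_filter_not_isIsolating_mul_le (mem_filter.1 hi).2 S) k
  have hpos : 0 < (#S ^ n) ^ k := by
    rw [pow_right_comm]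
    exact pow_pos (pos_of_gt h) n
  have hunion : #(I.biUnion Bad) * #S ^ k < (#S ^ n) ^ k * #S ^ k :=
    calc _ ≤ (∑ i ∈ I, #(Bad i)) * #S ^ k := Nat.mul_le_mul_right _ card_biUnion_le
      _ = ∑ i ∈ I, #(Bad i) * #S ^ k := sum_mul ..
      _ ≤ ∑ _i ∈ I, n ^ k * (#S ^ n) ^ k := sum_le_sum hBad
      _ ≤ Fintype.card ι * (n ^ k * (#S ^ n) ^ k) := by
        rw [sum_const, smul_eq_mul]
        exact Nat.mul_le_mul_right _ (card_le_univ I)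
      _ < (#S ^ n) ^ k * #S ^ k := by
        rw [← mul_assoc, mul_comm ((#S ^ n) ^ k)]
        exact Nat.mul_lt_mul_of_pos_right h hpos
  have hcard : #(I.biUnion Bad) < #(Fintype.piFinset fun _ : κ => T) := by
    simpa [T, Fintype.card_piFinset] using Nat.lt_of_mul_lt_mul_right hunion
  obtain ⟨w, hwT, hw⟩ := exists_mem_notMem_of_card_lt_card hcard
  refine ⟨w, fun j x => Fintype.mem_piFinset.1 (Fintype.mem_piFinset.1 hwT j) x, ?_⟩
  intro i hi
  by_contra! hfail
  exact hw (mem_biUnion.2 ⟨i, mem_filter.2 ⟨mem_univ i, hi⟩,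
    Fintype.mem_piFinset.2 fun j => mem_filter.2 ⟨Fintype.mem_piFinset.1 hwT j, hfail j⟩⟩)

end Counting

/-- Non-uniform Isolation Lemma: for any `2^m` families of subsets of `{1,…,m}` (`m ≥ 1`),
there are `m` weight assignments into `{1,…,4m}` such that every nonempty family has,
for some assignment, a unique minimum-weight set. -/
theorem stmt_15 {m : ℕ} (hm : 1 ≤ m)
    (𝓕 : Fin (2 ^ m) → Finset (Finset (Fin m))) :
    ∃ w : Fin m → (Fin m → ℕ),
      (∀ j i, w j i ∈ Finset.Icc 1 (4 * m)) ∧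
      ∀ i : Fin (2 ^ m), (𝓕 i).Nonempty →
        ∃ j : Fin m, ∃! F : Finset (Fin m), F ∈ 𝓕 i ∧
          ∀ G ∈ 𝓕 i, ∑ x ∈ F, w j x ≤ ∑ x ∈ G, w j x := by
  have hcount : Fintype.card (Fin (2 ^ m)) * Fintype.card (Fin m) ^ Fintype.card (Fin m) <
      #(Icc 1 (4 * m)) ^ Fintype.card (Fin m) := by
    simp only [Fintype.card_fin, Nat.card_Icc, Nat.add_sub_cancel, mul_pow]
    exact Nat.mul_lt_mul_of_pos_right (Nat.pow_lt_pow_left (by norm_num) (by omega))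
      (pow_pos (by omega) m)
  exact exists_forall_exists_isIsolating 𝓕 (Icc 1 (4 * m)) hcount
end

section
/- Let G be a graph on {1,…,n} that has a perfect matching, and let w be an assignment of positive integer weights to the edges such that G has a unique perfect matching of minimum total weight. Let B_{G,w} be the integer matrix obtained from the Tutte matrix of G by substituting x_{ij} := 2^{w(i,j)}. Then det(B_{G,w}) ≠ 0. -/
/-- A matching, given as a finset of ordered edge pairs `(i,j)` with `i < j`. -/
def IsMatchingF {n : ℕ} (G : SimpleGraph (Fin n)) (s : Finset (Fin n × Fin n)) : Prop :=
  (∀ p ∈ s, p.1 < p.2 ∧ G.Adj p.1 p.2) ∧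
    ∀ p ∈ s, ∀ q ∈ s, p ≠ q → p.1 ≠ q.1 ∧ p.1 ≠ q.2 ∧ p.2 ≠ q.1 ∧ p.2 ≠ q.2

/-- A perfect matching: a matching covering every vertex. -/
def IsPerfectMatchingF {n : ℕ} (G : SimpleGraph (Fin n)) (s : Finset (Fin n × Fin n)) : Prop :=
  IsMatchingF G s ∧ ∀ v : Fin n, ∃ p ∈ s, v = p.1 ∨ v = p.2

/-
Expand `det B` over permutations. Since `B` is skew-symmetric, reversing an odd cycle of `σ`
negates its term, so the permutations with an odd cycle cancel in pairs and only those whose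
cycles all have even length remain. For such a `σ` using only edges of `G`, the term is
`± 2 ^ w(σ)` with `w(σ) = ∑ᵥ w {v, σ v}`; 2-colouring the cycles splits these edges into two
perfect matchings `M₁, M₂` with `w(σ) = w(M₁) + w(M₂) ≥ 2W`, `W` the minimum weight, and
equality forces `M₁ = M₂ = M₀`, the unique minimum matching, i.e. `σ` is the involution of `M₀`.
Hence `det B ≡ ± 2 ^ (2W) [ZMOD 2 ^ (2W + 1)]`.
-/

open Equiv Equiv.Perm Finset
open scoped Matrix

namespace Equiv.Perm

variable {α : Type*} [Fintype α] [DecidableEq α]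

/-- `σ` with its cycle through `x` traversed backwards. -/
def reverseCycle (σ : Perm α) (x : α) : Perm α :=
  σ * (σ.cycleOf x)⁻¹ * (σ.cycleOf x)⁻¹

variable {σ : Perm α} {x y : α}

theorem reverseCycle_apply_of_mem (hy : y ∈ (σ.cycleOf x).support) :
    σ.reverseCycle x y = (σ.cycleOf x)⁻¹ y := by
  have hy' : (σ.cycleOf x)⁻¹ ((σ.cycleOf x)⁻¹ y) ∈ (σ.cycleOf x).support := by
    rwa [← support_inv, apply_mem_support, apply_mem_support, support_inv]
  rw [mem_support_cycleOf_iff] at hy'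
  rw [reverseCycle, mul_apply, mul_apply, ← hy'.1.cycleOf_apply]
  simp

theorem reverseCycle_apply_of_notMem (hy : y ∉ (σ.cycleOf x).support) :
    σ.reverseCycle x y = σ y := by
  rw [← support_inv, notMem_support] at hy
  simp only [reverseCycle, mul_apply, hy]

theorem cycleOf_reverseCycle (hx : σ x ≠ x) (y : α) :
    (σ.reverseCycle x).cycleOf y =
      if y ∈ (σ.cycleOf x).support then (σ.cycleOf x)⁻¹ else σ.cycleOf y := by
  split_ifs with hy
  · refine (cycle_is_cycleOf (by rwa [support_inv]) (mem_cycleFactorsFinset_iff.2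
      ⟨(isCycle_cycleOf σ hx).inv, fun z hz => ?_⟩)).symm
    rw [support_inv] at hz
    exact (reverseCycle_apply_of_mem hz).symm
  · by_cases hyσ : σ y = y
    · rw [(cycleOf_eq_one_iff _).2 hyσ, cycleOf_eq_one_iff, reverseCycle_apply_of_notMem hy, hyσ]
    · refine (cycle_is_cycleOf (mem_support_cycleOf_iff' hyσ |>.2 (.refl _ _))
        (mem_cycleFactorsFinset_iff.2 ⟨isCycle_cycleOf σ hyσ, fun z hz => ?_⟩)).symm
      have hzx : z ∉ (σ.cycleOf x).support := fun hzx => hy <| mem_support_cycleOf_iff.2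
        ⟨(mem_support_cycleOf_iff.1 hzx).1.trans (mem_support_cycleOf_iff.1 hz).1.symm,
          (mem_support_cycleOf_iff.1 hzx).2⟩
      rw [reverseCycle_apply_of_notMem hzx, (mem_support_cycleOf_iff.1 hz).1.cycleOf_apply]

theorem card_support_cycleOf_reverseCycle (hx : σ x ≠ x) (y : α) :
    #((σ.reverseCycle x).cycleOf y).support = #(σ.cycleOf y).support := by
  rw [cycleOf_reverseCycle hx]
  split_ifs with hy
  · rw [support_inv, (mem_support_cycleOf_iff.1 hy).1.symm.cycleOf_eq]
  · rfl

theorem reverseCycle_reverseCycle (hx : σ x ≠ x) : (σ.reverseCycle x).reverseCycle x = σ := by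
  have hxx : x ∈ (σ.cycleOf x).support := (mem_support_cycleOf_iff' hx).2 (.refl _ _)
  rw [reverseCycle, cycleOf_reverseCycle hx, if_pos hxx, reverseCycle]
  group

theorem sign_reverseCycle (σ : Perm α) (x : α) : sign (σ.reverseCycle x) = sign σ := by
  rw [reverseCycle, map_mul, map_mul, mul_assoc, Int.units_mul_self, mul_one]

/-- A cycle equal to its inverse is a transposition, so reversing an odd cycle changes `σ`. -/
theorem reverseCycle_ne (hodd : Odd #(σ.cycleOf x).support) : σ.reverseCycle x ≠ σ := by
  have hx : σ x ≠ x := support_cycleOf_nonempty.1 (card_pos.1 hodd.pos)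
  have hxx : x ∈ (σ.cycleOf x).support := (mem_support_cycleOf_iff' hx).2 (.refl _ _)
  have hcyc := isCycle_cycleOf σ hx
  intro h
  have hsq : (σ.cycleOf x) ^ 2 = 1 := by
    refine (hcyc.pow_eq_one_iff' (mem_support.1 hxx)).2 ?_
    have h1 := reverseCycle_apply_of_mem hxx
    rw [h, ← cycleOf_apply_self] at h1
    rw [pow_two, mul_apply, h1]
    simp
  have hdvd : #(σ.cycleOf x).support ∣ 2 := hcyc.orderOf ▸ orderOf_dvd_of_pow_eq_one hsq
  have := hcyc.two_le_card_support
  have := Nat.le_of_dvd two_pos hdvd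
  obtain ⟨k, hk⟩ := hodd
  omega

theorem even_card_support_cycleOf_of_sq_eq_one (hσ : σ ^ 2 = 1) (x : α) :
    Even #(σ.cycleOf x).support :=
  even_iff_two_dvd.2 <| two_dvd_card_support <| orderOf_dvd_iff_pow_eq_one.1 <|
    (orderOf_cycleOf_dvd_orderOf σ x).trans (orderOf_dvd_of_pow_eq_one hσ)

/-- Colour each point by the parity of its distance from a base point of its cycle; this is
well defined because the cycle lengths are even. -/
theorem exists_coloring_apply_eq_not (hfix : ∀ x, σ x ≠ x)
    (heven : ∀ x, Even #(σ.cycleOf x).support) : ∃ f : α → Bool, ∀ x, f (σ x) = !f x := by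
  let base (x : α) : α := (Quotient.mk (SameCycle.setoid σ) x).out
  have hbase (x : α) : σ.SameCycle (base x) x := Quotient.mk_out (s := SameCycle.setoid σ) x
  have hbase_apply (x : α) : base (σ x) = base x :=
    congrArg Quotient.out (Quotient.sound (sameCycle_apply_left.2 (.refl σ x)))
  choose k hk using fun x => (hbase x).exists_nat_pow_eq
  refine ⟨fun x => decide (Even (k x)), fun x => ?_⟩
  have hmod : k (σ x) ≡ k x + 1 [MOD #(σ.cycleOf (base x)).support] := by
    have hb : base x ∈ (σ.cycleOf (base x)).support :=
      mem_support_cycleOf_iff.2 ⟨.refl _ _, mem_support.2 (hfix _)⟩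
    rw [← (isCycleOn_support_cycleOf σ (base x)).pow_apply_eq_pow_apply hb, pow_succ',
      mul_apply, hk x, ← hbase_apply, hk (σ x)]
  have hparity : k (σ x) % 2 = (k x + 1) % 2 := hmod.of_dvd (even_iff_two_dvd.1 (heven _))
  simp only [Nat.even_iff]
  by_cases hx : k x % 2 = 0 <;> simp [hx] <;> omega

variable (α) in
def evenCyclePerms : Finset (Perm α) := {σ | ∀ x, Even #(σ.cycleOf x).support}

theorem mem_evenCyclePerms : σ ∈ evenCyclePerms α ↔ ∀ x, Even #(σ.cycleOf x).support := by
  simp [evenCyclePerms]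

/-- Fixed points do not count: their `cycleOf` is `1`, with empty support. -/
def oddCyclePoints (σ : Perm α) : Finset α := {x | Odd #(σ.cycleOf x).support}

theorem nonempty_oddCyclePoints_iff : (oddCyclePoints σ).Nonempty ↔ σ ∉ evenCyclePerms α := by
  simp [oddCyclePoints, evenCyclePerms, Finset.Nonempty]

theorem apply_ne_of_mem_oddCyclePoints (hx : x ∈ oddCyclePoints σ) : σ x ≠ x :=
  support_cycleOf_nonempty.1 (card_pos.1 (mem_filter.1 hx).2.pos)

theorem oddCyclePoints_reverseCycle (hx : σ x ≠ x) :
    oddCyclePoints (σ.reverseCycle x) = oddCyclePoints σ := by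
  ext y
  simp only [oddCyclePoints, mem_filter, card_support_cycleOf_reverseCycle hx]

/-- Reversal preserves `oddCyclePoints σ`, so the point chosen there does not change and this is
an involution. -/
noncomputable def reverseOddCycle (σ : Perm α) : Perm α :=
  if h : (oddCyclePoints σ).Nonempty then σ.reverseCycle h.choose else σ

theorem reverseOddCycle_of_nonempty (h : (oddCyclePoints σ).Nonempty) :
    reverseOddCycle σ = σ.reverseCycle h.choose :=
  dif_pos h

theorem oddCyclePoints_reverseOddCycle (σ : Perm α) :
    oddCyclePoints (reverseOddCycle σ) = oddCyclePoints σ := by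
  by_cases h : (oddCyclePoints σ).Nonempty
  · rw [reverseOddCycle_of_nonempty h]
    exact oddCyclePoints_reverseCycle (apply_ne_of_mem_oddCyclePoints h.choose_spec)
  · rw [reverseOddCycle, dif_neg h]

theorem reverseOddCycle_reverseOddCycle (σ : Perm α) :
    reverseOddCycle (reverseOddCycle σ) = σ := by
  by_cases h : (oddCyclePoints σ).Nonempty
  · have hsame := oddCyclePoints_reverseOddCycle σ
    have hchoose : ∀ (s t : Finset α) (hs : s.Nonempty) (ht : t.Nonempty), s = t →
        hs.choose = ht.choose := by
      rintro s t hs ht rfl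
      rfl
    rw [reverseOddCycle_of_nonempty (hsame ▸ h), hchoose _ _ _ h hsame,
      reverseOddCycle_of_nonempty h,
      reverseCycle_reverseCycle (apply_ne_of_mem_oddCyclePoints h.choose_spec)]
  · have hid : reverseOddCycle σ = σ := dif_neg h
    rw [hid, hid]

theorem reverseOddCycle_ne (h : (oddCyclePoints σ).Nonempty) : reverseOddCycle σ ≠ σ := by
  rw [reverseOddCycle_of_nonempty h]
  exact reverseCycle_ne (mem_filter.1 h.choose_spec).2

end Equiv.Perm

namespace Matrix

variable {R : Type*} [CommRing R] {ι : Type*} [Fintype ι] [DecidableEq ι] {B : Matrix ι ι R}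
  {σ : Perm ι}

theorem prod_reverseCycle (hB : Bᵀ = -B) {x : ι} (hodd : Odd #(σ.cycleOf x).support) :
    ∏ i, B (σ.reverseCycle x i) i = -∏ i, B (σ i) i := by
  set c := σ.cycleOf x
  have hentry (i : ι) : B (σ.reverseCycle x (c i)) (c i) =
      (if i ∈ c.support then -1 else 1) * B (σ i) i := by
    split_ifs with hi
    · have hci : c i = σ i := (mem_support_cycleOf_iff.1 hi).1.cycleOf_apply
      have hskew : B i (σ i) = -B (σ i) i := by simpa using congrFun (congrFun hB (σ i)) i
      rw [reverseCycle_apply_of_mem (apply_mem_support.2 hi), Perm.inv_eq_iff_eq.2 rfl, hci,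
        hskew, neg_one_mul]
    · rw [notMem_support.1 hi, reverseCycle_apply_of_notMem hi, one_mul]
  rw [← Fintype.prod_equiv c _ _ fun _ => rfl, Fintype.prod_congr _ _ hentry, prod_mul_distrib,
    prod_ite_mem, univ_inter, prod_const, hodd.neg_one_pow, neg_one_mul]

theorem sign_smul_prod_reverseOddCycle (hB : Bᵀ = -B) (h : (oddCyclePoints σ).Nonempty) :
    sign (reverseOddCycle σ) • ∏ i, B (reverseOddCycle σ i) i = -(sign σ • ∏ i, B (σ i) i) := by
  rw [reverseOddCycle_of_nonempty h, sign_reverseCycle,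
    prod_reverseCycle hB (mem_filter.1 h.choose_spec).2, smul_neg]

theorem det_eq_sum_evenCyclePerms (hB : Bᵀ = -B) :
    B.det = ∑ σ ∈ evenCyclePerms ι, sign σ • ∏ i, B (σ i) i := by
  rw [det_apply, ← sum_add_sum_compl (evenCyclePerms ι), add_eq_left]
  have hodd {σ : Perm ι} (hσ : σ ∈ (evenCyclePerms ι)ᶜ) : (oddCyclePoints σ).Nonempty :=
    nonempty_oddCyclePoints_iff.2 (mem_compl.1 hσ)
  refine sum_involution (fun σ _ => reverseOddCycle σ)
    (fun σ hσ => by rw [sign_smul_prod_reverseOddCycle hB (hodd hσ), add_neg_cancel])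
    (fun σ hσ _ => reverseOddCycle_ne (hodd hσ)) (fun σ hσ => ?_)
    (fun σ _ => reverseOddCycle_reverseOddCycle σ)
  rw [mem_compl, ← nonempty_oddCyclePoints_iff, oddCyclePoints_reverseOddCycle]
  exact hodd hσ

end Matrix

theorem eq_min_or_eq_max_iff {α : Type*} [LinearOrder α] {a b x : α} :
    x = min a b ∨ x = max a b ↔ x = a ∨ x = b := by
  rcases le_total a b with h | h
  · rw [min_eq_left h, max_eq_right h]
  · rw [min_eq_right h, max_eq_left h, or_comm]

namespace IsPerfectMatchingF

variable {n : ℕ} {G : SimpleGraph (Fin n)} {s : Finset (Fin n × Fin n)}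

theorem eq_of_mem_of_mem (hs : IsPerfectMatchingF G s) {p q : Fin n × Fin n} (hp : p ∈ s)
    (hq : q ∈ s) {v : Fin n} (hvp : v = p.1 ∨ v = p.2) (hvq : v = q.1 ∨ v = q.2) : p = q := by
  by_contra hpq
  obtain ⟨h11, h12, h21, h22⟩ := hs.1.2 p hp q hq hpq
  rcases hvp with rfl | rfl <;> rcases hvq with h | h <;> contradiction

theorem sum_eq {M : Type*} [AddCommMonoid M] (hs : IsPerfectMatchingF G s) (g : Fin n → M) :
    ∑ v, g v = ∑ p ∈ s, (g p.1 + g p.2) := by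
  have huniv : (univ : Finset (Fin n)) = s.biUnion fun p => {p.1, p.2} := by
    ext v
    simpa [eq_comm] using hs.2 v
  rw [huniv, sum_biUnion]
  · exact sum_congr rfl fun p hp => sum_pair (hs.1.1 p hp).1.ne
  · intro p hp q hq hpq
    simp only [Function.onFun, disjoint_left, mem_insert, mem_singleton]
    rintro v hvp hvq
    exact hpq (hs.eq_of_mem_of_mem hp hq hvp hvq)

theorem exists_perm (hs : IsPerfectMatchingF G s) :
    ∃ τ : Perm (Fin n), τ ^ 2 = 1 ∧ ∀ p ∈ s, τ p.1 = p.2 ∧ τ p.2 = p.1 := by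
  choose e he hve using hs.2
  let partner (v : Fin n) : Fin n := if v = (e v).1 then (e v).2 else (e v).1
  have hpartner (p : Fin n × Fin n) (hp : p ∈ s) : partner p.1 = p.2 ∧ partner p.2 = p.1 := by
    have h1 : e p.1 = p := hs.eq_of_mem_of_mem (he _) hp (hve _) (.inl rfl)
    have h2 : e p.2 = p := hs.eq_of_mem_of_mem (he _) hp (hve _) (.inr rfl)
    simp only [partner, h1, h2, if_neg (hs.1.1 p hp).1.ne', if_pos, and_true]
  have hinv : Function.Involutive partner := fun v => by
    rcases hve v with h | h <;> rw [h] <;> simp only [hpartner _ (he v)]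
  refine ⟨hinv.toPerm, ?_, hpartner⟩
  ext v
  simp [sq, hinv v]

end IsPerfectMatchingF

section Coloring

variable {n : ℕ} {G : SimpleGraph (Fin n)} {σ : Perm (Fin n)} {f : Fin n → Bool}

theorem ne_apply_of_coloring (hf : ∀ v, f (σ v) = !f v) {u v : Fin n} (h : f u = f v) :
    u ≠ σ v := by
  rintro rfl
  rw [hf] at h
  exact (Bool.eq_not_self _).1 h.symm

theorem isPerfectMatchingF_image_of_coloring (hadj : ∀ v, G.Adj v (σ v))
    (hf : ∀ v, f (σ v) = !f v) (b : Bool) :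
    IsPerfectMatchingF G (({v | f v = b} : Finset (Fin n)).image
      fun v => (min v (σ v), max v (σ v))) := by
  refine ⟨⟨fun p hp => ?_, fun p hp q hq hpq => ?_⟩, fun v => ?_⟩
  · obtain ⟨v, -, rfl⟩ := mem_image.1 hp
    refine ⟨min_lt_max.2 (hadj v).ne, ?_⟩
    rcases le_total v (σ v) with h | h
    · simpa only [min_eq_left h, max_eq_right h] using hadj v
    · simpa only [min_eq_right h, max_eq_left h] using (hadj v).symm
  · obtain ⟨u, hu, rfl⟩ := mem_image.1 hp
    obtain ⟨v, hv, rfl⟩ := mem_image.1 hq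
    have hfuv : f u = f v := (mem_filter.1 hu).2.trans (mem_filter.1 hv).2.symm
    have key (x : Fin n) (hxu : x = u ∨ x = σ u) (hxv : x = v ∨ x = σ v) : False := by
      rcases hxu with rfl | rfl <;> rcases hxv with h | h
      · exact hpq (by rw [h])
      · exact ne_apply_of_coloring hf hfuv h
      · exact ne_apply_of_coloring hf hfuv.symm h.symm
      · exact hpq (by rw [σ.injective h])
    simp only [ne_eq]
    refine ⟨fun h => key _ (eq_min_or_eq_max_iff.1 (.inl rfl)) (eq_min_or_eq_max_iff.1 (.inl h)),
      fun h => key _ (eq_min_or_eq_max_iff.1 (.inl rfl)) (eq_min_or_eq_max_iff.1 (.inr h)),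
      fun h => key _ (eq_min_or_eq_max_iff.1 (.inr rfl)) (eq_min_or_eq_max_iff.1 (.inl h)),
      fun h => key _ (eq_min_or_eq_max_iff.1 (.inr rfl)) (eq_min_or_eq_max_iff.1 (.inr h))⟩
  · have hcover : ∃ u, f u = b ∧ (v = u ∨ v = σ u) := by
      by_cases hv : f v = b
      · exact ⟨v, hv, .inl rfl⟩
      · have hσv : σ (σ⁻¹ v) = v := σ.apply_symm_apply v
        refine ⟨σ⁻¹ v, ?_, .inr hσv.symm⟩
        rw [← Bool.not_inj_iff, ← hf, hσv, Bool.eq_not]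
        exact hv
    obtain ⟨u, hu, hvu⟩ := hcover
    exact ⟨_, mem_image_of_mem _ (mem_filter.2 ⟨mem_univ u, hu⟩), eq_min_or_eq_max_iff.2 hvu⟩

theorem sum_image_of_coloring {M : Type*} [AddCommMonoid M] (hf : ∀ v, f (σ v) = !f v)
    (b : Bool) (c : Fin n × Fin n → M) :
    ∑ p ∈ ({v | f v = b} : Finset (Fin n)).image (fun v => (min v (σ v), max v (σ v))), c p =
      ∑ v with f v = b, c (min v (σ v), max v (σ v)) := by
  refine sum_image fun u hu v hv huv => ?_
  have hu' := eq_min_or_eq_max_iff.2 (Or.inl rfl : u = u ∨ u = σ u)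
  rw [Prod.mk.injEq] at huv
  rw [huv.1, huv.2, eq_min_or_eq_max_iff] at hu'
  exact hu'.resolve_right (ne_apply_of_coloring hf
    ((mem_filter.1 hu).2.trans (mem_filter.1 hv).2.symm))

end Coloring

section MinimumMatching

variable {n : ℕ} {G : SimpleGraph (Fin n)} {w : Fin n → Fin n → ℕ} {s₀ : Finset (Fin n × Fin n)}
  {τ : Perm (Fin n)}

theorem apply_eq_of_min_max_mem (hτ : ∀ p ∈ s₀, τ p.1 = p.2 ∧ τ p.2 = p.1) {a b : Fin n}
    (h : (min a b, max a b) ∈ s₀) : τ a = b := by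
  rcases le_total a b with hab | hab
  · simpa only [min_eq_left hab, max_eq_right hab] using (hτ _ h).1
  · simpa only [min_eq_right hab, max_eq_left hab] using (hτ _ h).2

theorem IsPerfectMatchingF.adj_apply (hs₀ : IsPerfectMatchingF G s₀)
    (hτ : ∀ p ∈ s₀, τ p.1 = p.2 ∧ τ p.2 = p.1) (v : Fin n) : G.Adj v (τ v) := by
  obtain ⟨p, hp, hv | hv⟩ := hs₀.2 v
  · rw [hv, (hτ p hp).1]
    exact (hs₀.1.1 p hp).2
  · rw [hv, (hτ p hp).2]
    exact (hs₀.1.1 p hp).2.symm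

theorem IsPerfectMatchingF.sum_weight_eq_two_mul (hs₀ : IsPerfectMatchingF G s₀)
    (w : Fin n → Fin n → ℕ) (hτ : ∀ p ∈ s₀, τ p.1 = p.2 ∧ τ p.2 = p.1) :
    ∑ v, w (min v (τ v)) (max v (τ v)) = 2 * ∑ p ∈ s₀, w p.1 p.2 := by
  rw [hs₀.sum_eq, mul_sum]
  refine sum_congr rfl fun p hp => ?_
  have hlt := (hs₀.1.1 p hp).1.le
  rw [(hτ p hp).1, (hτ p hp).2, min_eq_left hlt, max_eq_right hlt, min_eq_right hlt,
    max_eq_left hlt, two_mul]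

theorem two_mul_lt_sum_weight (hτ : ∀ p ∈ s₀, τ p.1 = p.2 ∧ τ p.2 = p.1)
    (hmin : ∀ t, IsPerfectMatchingF G t → ∑ p ∈ s₀, w p.1 p.2 ≤ ∑ p ∈ t, w p.1 p.2)
    (huniq : ∀ t, IsPerfectMatchingF G t → ∑ p ∈ t, w p.1 p.2 ≤ ∑ p ∈ s₀, w p.1 p.2 → t = s₀)
    {σ : Perm (Fin n)} (hadj : ∀ v, G.Adj v (σ v)) (heven : ∀ v, Even #(σ.cycleOf v).support)
    (hne : σ ≠ τ) : 2 * ∑ p ∈ s₀, w p.1 p.2 < ∑ v, w (min v (σ v)) (max v (σ v)) := by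
  obtain ⟨f, hf⟩ := exists_coloring_apply_eq_not (fun v => (hadj v).ne') heven
  let M (b : Bool) : Finset (Fin n × Fin n) :=
    ({v | f v = b} : Finset (Fin n)).image fun v => (min v (σ v), max v (σ v))
  have hM (b : Bool) : IsPerfectMatchingF G (M b) :=
    isPerfectMatchingF_image_of_coloring hadj hf b
  have hsum : ∑ p ∈ M true, w p.1 p.2 + ∑ p ∈ M false, w p.1 p.2 =
      ∑ v, w (min v (σ v)) (max v (σ v)) := by
    rw [← Fintype.sum_bool fun b => ∑ p ∈ M b, w p.1 p.2, ← sum_fiberwise univ f]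
    exact sum_congr rfl fun b _ => sum_image_of_coloring hf b fun p => w p.1 p.2
  by_contra! hle
  have hM_eq (b : Bool) : M b = s₀ := by
    refine huniq _ (hM b) ?_
    have := hmin _ (hM true)
    have := hmin _ (hM false)
    cases b <;> omega
  refine hne (Equiv.ext fun v => (apply_eq_of_min_max_mem hτ ?_).symm)
  rw [← hM_eq (f v)]
  exact mem_image_of_mem _ (mem_filter.2 ⟨mem_univ v, rfl⟩)

end MinimumMatching

theorem add_ne_zero_of_abs_eq_two_pow {a b : ℤ} {k : ℕ} (ha : |a| = 2 ^ k)
    (hb : 2 ^ (k + 1) ∣ b) : a + b ≠ 0 := by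
  intro hab
  have hdvd : (2 : ℤ) ^ (k + 1) ∣ 2 ^ k := by
    rwa [← ha, dvd_abs, eq_neg_of_add_eq_zero_left hab, dvd_neg]
  have := (pow_dvd_pow_iff two_ne_zero Int.prime_two.not_isUnit).1 hdvd
  omega

section TutteMatrix

variable {n : ℕ} (G : SimpleGraph (Fin n)) [DecidableRel G.Adj] (w : Fin n → Fin n → ℕ)

def twoPowTutteMatrix : Matrix (Fin n) (Fin n) ℤ :=
  Matrix.of fun i j => if G.Adj i j then (if i < j then 2 ^ (w i j) else -(2 ^ (w j i))) else 0

theorem twoPowTutteMatrix_transpose : (twoPowTutteMatrix G w)ᵀ = -twoPowTutteMatrix G w := by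
  ext i j
  simp only [twoPowTutteMatrix, Matrix.transpose_apply, Matrix.neg_apply, Matrix.of_apply,
    G.adj_comm j i]
  split_ifs with hadj hji hij hij <;> try simp only [neg_neg, neg_zero]
  · exact absurd (hji.trans hij) (lt_irrefl _)
  · exact absurd (le_antisymm (not_lt.1 hij) (not_lt.1 hji)) hadj.ne'

variable {G w}

theorem abs_twoPowTutteMatrix_apply {i j : Fin n} (h : G.Adj i j) :
    |twoPowTutteMatrix G w i j| = 2 ^ w (min i j) (max i j) := by
  rcases lt_or_gt_of_ne h.ne with hij | hji
  · simp [twoPowTutteMatrix, h, hij, min_eq_left hij.le, max_eq_right hij.le]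
  · simp [twoPowTutteMatrix, h, hji.not_gt, min_eq_right hji.le, max_eq_left hji.le]

theorem abs_sign_smul_prod_twoPowTutteMatrix {σ : Perm (Fin n)} (hadj : ∀ v, G.Adj v (σ v)) :
    |sign σ • ∏ v, twoPowTutteMatrix G w (σ v) v| =
      2 ^ ∑ v, w (min v (σ v)) (max v (σ v)) := by
  rw [Units.smul_def, smul_eq_mul, abs_mul, Int.isUnit_iff_abs_eq.1 (sign σ).isUnit, one_mul,
    abs_prod, ← prod_pow_eq_pow_sum]
  refine prod_congr rfl fun v _ => ?_
  rw [abs_twoPowTutteMatrix_apply (hadj v).symm, min_comm, max_comm]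

theorem two_pow_dvd_sign_smul_prod_twoPowTutteMatrix {σ : Perm (Fin n)} {k : ℕ}
    (hk : (∀ v, G.Adj v (σ v)) → k ≤ ∑ v, w (min v (σ v)) (max v (σ v))) :
    2 ^ k ∣ sign σ • ∏ v, twoPowTutteMatrix G w (σ v) v := by
  by_cases hadj : ∀ v, G.Adj v (σ v)
  · rw [← dvd_abs, abs_sign_smul_prod_twoPowTutteMatrix hadj]
    exact pow_dvd_pow 2 (hk hadj)
  · obtain ⟨v, hv⟩ := not_forall.1 hadj
    rw [prod_eq_zero (mem_univ v) (by simp [twoPowTutteMatrix, G.adj_comm, hv]), smul_zero]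
    exact dvd_zero _

end TutteMatrix

theorem stmt_17_general {n : ℕ} (G : SimpleGraph (Fin n)) [DecidableRel G.Adj]
    (w : Fin n → Fin n → ℕ)
    (huniq : ∃! s : Finset (Fin n × Fin n), IsPerfectMatchingF G s ∧
      ∀ t : Finset (Fin n × Fin n), IsPerfectMatchingF G t →
        ∑ p ∈ s, w p.1 p.2 ≤ ∑ p ∈ t, w p.1 p.2)
    (B : Matrix (Fin n) (Fin n) ℤ)
    (hB : B = Matrix.of fun i j =>
      if G.Adj i j then (if i < j then 2 ^ (w i j) else -(2 ^ (w j i))) else 0) :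
    B.det ≠ 0 := by
  obtain ⟨s₀, ⟨hs₀, hmin⟩, huniq⟩ := huniq
  obtain ⟨τ, hτ_sq, hτ⟩ := hs₀.exists_perm
  have hτ_even : τ ∈ evenCyclePerms (Fin n) :=
    mem_evenCyclePerms.2 (even_card_support_cycleOf_of_sq_eq_one hτ_sq)
  replace hB : B = twoPowTutteMatrix G w := hB
  subst hB
  rw [Matrix.det_eq_sum_evenCyclePerms (twoPowTutteMatrix_transpose G w),
    ← add_sum_erase _ _ hτ_even]
  refine add_ne_zero_of_abs_eq_two_pow (k := 2 * ∑ p ∈ s₀, w p.1 p.2) ?_ (dvd_sum fun σ hσ => ?_)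
  · rw [abs_sign_smul_prod_twoPowTutteMatrix (hs₀.adj_apply hτ), hs₀.sum_weight_eq_two_mul w hτ]
  · refine two_pow_dvd_sign_smul_prod_twoPowTutteMatrix fun hadj => ?_
    exact two_mul_lt_sum_weight hτ hmin
      (fun t ht hle => huniq t ⟨ht, fun t' ht' => hle.trans (hmin t' ht')⟩) hadj
      (mem_evenCyclePerms.1 (mem_of_mem_erase hσ)) (ne_of_mem_erase hσ)

/-- Mulmuley–Vazirani–Vazirani: if `G` has a unique minimum-weight perfect matching with
respect to positive integer edge weights `w`, then the integer matrix obtained from the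
Tutte matrix by substituting `x_{ij} := 2^{w(i,j)}` has nonzero determinant. -/
theorem stmt_17 {n : ℕ} (G : SimpleGraph (Fin n)) [DecidableRel G.Adj]
    (w : Fin n → Fin n → ℕ)
    (hwsym : ∀ i j, w i j = w j i)
    (hwpos : ∀ i j, G.Adj i j → 1 ≤ w i j)
    (huniq : ∃! s : Finset (Fin n × Fin n), IsPerfectMatchingF G s ∧
      ∀ t : Finset (Fin n × Fin n), IsPerfectMatchingF G t →
        ∑ p ∈ s, w p.1 p.2 ≤ ∑ p ∈ t, w p.1 p.2)
    (B : Matrix (Fin n) (Fin n) ℤ)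
    (hB : B = Matrix.of fun i j =>
      if G.Adj i j then (if i < j then 2 ^ (w i j) else -(2 ^ (w j i))) else 0) :
    B.det ≠ 0 :=
  stmt_17_general G w huniq B hB
end
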